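/- Let K be a finite field of characteristic 2 and let G be a finite 2-group having an abelian subgroup A of index 2 and an element b ∈ G \ A of order 2 with b⁻¹ab = a⁻¹ for all a ∈ A. Then the subgroup S_K(G) = {xx* : x ∈ V(KG)} of V(KG) has order |S_K(G)| = |K|^((|A| - |A[2]|)/2), where A[2] = {a ∈ A : a² = 1}. -/

import Mathlib

/-- The augmentation homomorphism `χ : KG → K`. -/
noncomputable def aug (K G : Type*) [CommSemiring K] [Group G] :
    MonoidAlgebra K G →ₐ[K] K :=
  MonoidAlgebra.lift K K G 1

/-- The `K`-linear anti-automorphism of `KG` determined by `g ↦ g⁻¹`. -/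
noncomputable def gstar {K G : Type*} [CommSemiring K] [Group G]
    (x : MonoidAlgebra K G) : MonoidAlgebra K G :=
  MonoidAlgebra.ofCoeff (Finsupp.mapDomain (fun g : G => g⁻¹) x.coeff)

instance instCoeFunMA {K G : Type*} [Semiring K] :
    CoeFun (MonoidAlgebra K G) (fun _ => G → K) :=
  ⟨fun x => x.coeff⟩

section Main
variable {K G : Type*} [Field K] [CharP K 2] [Group G] [Fintype G]

lemma gstar_apply (x : MonoidAlgebra K G) (g : G) : gstar x g = x g⁻¹ := by
  have h : g = (fun g : G => g⁻¹) g⁻¹ := by simp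
  rw [gstar]; conv_lhs => rw [h]
  rw [MonoidAlgebra.coeff_ofCoeff, Finsupp.mapDomain_apply (fun a c h => by simpa using h) x.coeff]

lemma gstar_add (x y : MonoidAlgebra K G) : gstar (x + y) = gstar x + gstar y := by
  simp only [gstar, MonoidAlgebra.coeff_add, Finsupp.mapDomain_add, MonoidAlgebra.ofCoeff_add]

lemma gstar_single (g : G) (α : K) :
    gstar (MonoidAlgebra.single g α) = MonoidAlgebra.single g⁻¹ α := by
  simp only [gstar, MonoidAlgebra.coeff_single, Finsupp.mapDomain_single,
    MonoidAlgebra.ofCoeff_single]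

lemma gstar_one : gstar (1 : MonoidAlgebra K G) = 1 := by
  rw [MonoidAlgebra.one_def, gstar_single, inv_one]

lemma gstar_gstar (x : MonoidAlgebra K G) : gstar (gstar x) = x := by
  ext g; rw [gstar_apply, gstar_apply, inv_inv]

lemma gstar_mul (x y : MonoidAlgebra K G) : gstar (x * y) = gstar y * gstar x := by
  induction x using MonoidAlgebra.induction_linear with
  | zero => simp [gstar, Finsupp.mapDomain_zero]
  | add f g hf hg => rw [add_mul, gstar_add, hf, hg, gstar_add, mul_add]
  | single g α =>
    induction y using MonoidAlgebra.induction_linear with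
    | zero => simp [gstar, Finsupp.mapDomain_zero]
    | add f h hf hh => rw [mul_add, gstar_add, hf, hh, gstar_add, add_mul]
    | single h β =>
      rw [MonoidAlgebra.single_mul_single, gstar_single, gstar_single, gstar_single,
        MonoidAlgebra.single_mul_single, mul_inv_rev, mul_comm β α]

lemma gstar_pow (x : MonoidAlgebra K G) (n : ℕ) : gstar (x ^ n) = (gstar x) ^ n := by
  induction n with
  | zero => simpa using gstar_one
  | succ n ih => rw [pow_succ, gstar_mul, ih, ← pow_succ']

lemma mul_apply' (f h : MonoidAlgebra K G) (c : G) :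
    (f * h) c = ∑ a : G, f a * h (a⁻¹ * c) := by
  rw [MonoidAlgebra.coeff_mul_apply_left, Finsupp.sum_fintype _ _ (fun a => by simp)]

lemma aug_apply' (f : MonoidAlgebra K G) : aug K G f = ∑ a : G, f a := by
  rw [aug, MonoidAlgebra.lift_apply, Finsupp.sum_fintype] <;> simp

lemma aug_single (g : G) (α : K) : aug K G (MonoidAlgebra.single g α) = α := by
  rw [aug, MonoidAlgebra.lift_apply, MonoidAlgebra.coeff_single, Finsupp.sum_single_index] <;> simp

lemma Raddself (p : MonoidAlgebra K G) : p + p = 0 := by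
  ext g; rw [MonoidAlgebra.coeff_add]; exact CharTwo.add_self_eq_zero _


lemma norm_apply (x : MonoidAlgebra K G) (c : G) :
    (x * gstar x) c = ∑ a : G, x a * x (c⁻¹ * a) := by
  rw [mul_apply']
  exact Finset.sum_congr rfl fun a _ => by rw [gstar_apply, mul_inv_rev, inv_inv]

lemma norm_apply_one (x : MonoidAlgebra K G) :
    (x * gstar x) 1 = (aug K G x) ^ 2 := by
  rw [norm_apply, aug_apply', sum_pow_char]
  exact Finset.sum_congr rfl fun a _ => by rw [inv_one, one_mul, sq]

lemma norm_apply_inv (x : MonoidAlgebra K G) (c : G) :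
    (x * gstar x) c⁻¹ = (x * gstar x) c := by
  rw [norm_apply, norm_apply, inv_inv]
  rw [← Equiv.sum_comp (Equiv.mulLeft c⁻¹) (fun a => x a * x (c * a))]
  exact Finset.sum_congr rfl fun a _ => by
    simp [Equiv.coe_mulLeft, mul_inv_cancel_left, mul_comm]

lemma norm_apply_invol (x : MonoidAlgebra K G) (c : G) (hc : c * c = 1) (hc1 : c ≠ 1) :
    (x * gstar x) c = 0 := by
  have hcinv : c⁻¹ = c := inv_eq_of_mul_eq_one_right hc
  rw [norm_apply, hcinv]
  refine Finset.sum_involution (fun a _ => c * a) (fun a _ => ?_) (fun a _ _ => ?_)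
    (fun a ha => Finset.mem_univ _)
    (fun a ha => show c * (c * a) = a by rw [← mul_assoc, hc, one_mul])
  · rw [← mul_assoc, hc, one_mul, mul_comm (x (c * a))]
    exact CharTwo.add_self_eq_zero _
  · intro h
    exact hc1 (by simpa using congrArg (· * a⁻¹) h)

variable (A : Subgroup G)

/-- commutation of A-supported elements -/
lemma commA (hA : ∀ x ∈ A, ∀ y ∈ A, x * y = y * x) (y z : MonoidAlgebra K G)
    (hy : ∀ g, g ∉ A → y g = 0) (hz : ∀ g, g ∉ A → z g = 0) : y * z = z * y := by
  classical
  ext c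
  rw [mul_apply', mul_apply']
  have key : ∀ f h : MonoidAlgebra K G, (f * h) c =
      ∑ a : G, ∑ g : G, if a * g = c then f a * h g else 0 := by
    intro f h
    rw [mul_apply']
    refine Finset.sum_congr rfl fun a _ => ?_
    calc f a * h (a⁻¹ * c) = ∑ g : G, if g = a⁻¹ * c then f a * h g else 0 := by
          rw [Finset.sum_ite_eq' Finset.univ (a⁻¹ * c) fun g => f a * h g]; simp
      _ = ∑ g : G, if a * g = c then f a * h g else 0 := by
          simp only [eq_inv_mul_iff_mul_eq]
  rw [← mul_apply', ← mul_apply', key, key]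
  rw [Finset.sum_comm]
  refine Finset.sum_congr rfl fun a _ => Finset.sum_congr rfl fun g _ => ?_
  by_cases ha : a ∈ A
  · by_cases hg : g ∈ A
    · rw [hA g hg a ha, mul_comm (y g)]
    · rw [hy g hg, zero_mul, mul_zero, ite_self, ite_self]
  · rw [hz a ha, mul_zero, zero_mul, ite_self, ite_self]

lemma suppA_mul (y z : MonoidAlgebra K G)
    (hy : ∀ g, g ∉ A → y g = 0) (hz : ∀ g, g ∉ A → z g = 0) :
    ∀ g, g ∉ A → (y * z) g = 0 := by
  intro g hg
  rw [mul_apply']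
  refine Finset.sum_eq_zero fun a _ => ?_
  by_cases ha : a ∈ A
  · have : a⁻¹ * g ∉ A := fun hmem => hg (by simpa using A.mul_mem ha hmem)
    rw [hz _ this, mul_zero]
  · rw [hy a ha, zero_mul]

lemma suppA_gstar (y : MonoidAlgebra K G) (hy : ∀ g, g ∉ A → y g = 0) :
    ∀ g, g ∉ A → gstar y g = 0 := by
  intro g hg
  rw [gstar_apply]
  exact hy g⁻¹ (fun hmem => hg (by simpa using hmem))

lemma suppA_add (y z : MonoidAlgebra K G)
    (hy : ∀ g, g ∉ A → y g = 0) (hz : ∀ g, g ∉ A → z g = 0) :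
    ∀ g, g ∉ A → (y + z) g = 0 := fun g hg => by
  rw [MonoidAlgebra.coeff_add, Finsupp.add_apply, hy g hg, hz g hg, add_zero]

lemma suppA_pow (y : MonoidAlgebra K G) (hy : ∀ g, g ∉ A → y g = 0) (n : ℕ) (hn : n ≠ 0) :
    ∀ g, g ∉ A → (y ^ n) g = 0 := by
  induction n with
  | zero => exact absurd rfl hn
  | succ n ih =>
    rcases Nat.eq_zero_or_pos n with rfl | hpos
    · simpa using hy
    · rw [pow_succ]
      exact suppA_mul A _ y (ih hpos.ne') hy

variable {A} in
lemma aux_bc (b : G) (hbb : b * b = 1) (hinv : ∀ a ∈ A, b⁻¹ * a * b = a⁻¹)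
    (c : G) (h1 : b * c ∈ A) : b * c⁻¹ = b * c := by
  have h2 : b⁻¹ * (b * c) * b = (b * c)⁻¹ := hinv _ h1
  have h3 : c * b = c⁻¹ * b⁻¹ := by
    calc c * b = b⁻¹ * (b * c) * b := by group
      _ = (b * c)⁻¹ := h2
      _ = c⁻¹ * b⁻¹ := by rw [mul_inv_rev]
  calc b * c⁻¹ = b * ((c⁻¹ * b⁻¹) * b) := by group
    _ = b * ((c * b) * b) := by rw [← h3]
    _ = b * c := by rw [mul_assoc c b b, hbb, mul_one]

variable {A} in
lemma out_sq (hidx : A.index = 2) (b : G) (hbb : b * b = 1) (hbA : b ∉ A)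
    (hinv : ∀ a ∈ A, b⁻¹ * a * b = a⁻¹) (g : G) (hg : g ∉ A) : g * g = 1 := by
  have hbi : b⁻¹ = b := inv_eq_of_mul_eq_one_right hbb
  have ha0 : b⁻¹ * g ∈ A := by
    rw [Subgroup.mul_mem_iff_of_index_two hidx]
    simp [hbA, hg, A.inv_mem_iff]
  set a := b⁻¹ * g with hadef
  have hc : b⁻¹ * a * b = a⁻¹ := hinv _ ha0
  have hab : a * b = b * a⁻¹ := by
    calc a * b = b * (b⁻¹ * a * b) := by group
      _ = b * a⁻¹ := by rw [hc]
  calc g * g = b * (a * b) * a := by rw [hadef]; group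
    _ = b * (b * a⁻¹) * a := by rw [hab]
    _ = (b * b) * (a⁻¹ * a) := by group
    _ = 1 := by rw [hbb, inv_mul_cancel, mul_one]

variable {A} in
lemma B_mul (b : G) (hbb : b * b = 1) (hinv : ∀ a ∈ A, b⁻¹ * a * b = a⁻¹)
    (y : MonoidAlgebra K G) (hy : ∀ g, g ∉ A → y g = 0) :
    MonoidAlgebra.single b (1:K) * y = gstar y * MonoidAlgebra.single b (1:K) := by
  have hbi : b⁻¹ = b := inv_eq_of_mul_eq_one_right hbb
  ext c
  rw [MonoidAlgebra.single_mul_apply, MonoidAlgebra.mul_single_apply, one_mul, mul_one,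
    gstar_apply, mul_inv_rev, inv_inv, hbi]
  by_cases h1 : b * c ∈ A
  · rw [aux_bc b hbb hinv c h1]
  · by_cases h2 : b * c⁻¹ ∈ A
    · exfalso
      apply h1
      have := aux_bc b hbb hinv c⁻¹ h2
      rw [inv_inv] at this
      rw [this]
      exact h2
    · rw [hy _ h1, hy _ h2]


variable {A} in
lemma sq_step (b : G) (hbb : b * b = 1) (hinv : ∀ a ∈ A, b⁻¹ * a * b = a⁻¹)
    (y : MonoidAlgebra K G) (hy : ∀ g, g ∉ A → y g = 0) :
    (y * (1 + MonoidAlgebra.single b (1:K))) ^ 2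
      = (y * (y + gstar y)) * (1 + MonoidAlgebra.single b (1:K)) := by
  set B := MonoidAlgebra.single b (1:K) with hB
  set s := gstar y with hs
  have h1 : B * y = s * B := B_mul b hbb hinv y hy
  have h3 : B * B = 1 := by
    rw [hB, MonoidAlgebra.single_mul_single, hbb, one_mul, ← MonoidAlgebra.one_def]
  calc (y * (1 + B)) ^ 2 = y * (((1 + B) * y) * (1 + B)) := by rw [sq]; noncomm_ring
    _ = y * ((y + s * B) * (1 + B)) := by rw [add_mul, one_mul, h1]
    _ = y*y + y*s*(B*B) + (y*y + y*s)*B := by noncomm_ring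
    _ = (y * (y + s)) * (1 + B) := by rw [h3]; noncomm_ring

variable {A} in
lemma sum_single_sq (hA : ∀ x ∈ A, ∀ y ∈ A, x * y = y * x)
    (p : G → G) (c : G → K) (hp : ∀ i, p i ∈ A ∨ c i = 0) :
    (∑ i : G, MonoidAlgebra.single (p i) (c i)) ^ 2
      = ∑ i : G, MonoidAlgebra.single (p i * p i) (c i * c i) := by
  classical
  rw [sq, Finset.sum_mul_sum]
  have expand : ∀ i j : G, MonoidAlgebra.single (p i) (c i) * MonoidAlgebra.single (p j) (c j)
      = MonoidAlgebra.single (p i * p j) (c i * c j) := fun i j =>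
    MonoidAlgebra.single_mul_single _ _ _ _
  simp_rw [expand]
  rw [← Finset.sum_product']
  rw [← Finset.sum_filter_add_sum_filter_not (Finset.univ ×ˢ Finset.univ)
    (fun q : G × G => q.1 = q.2)]
  have hdiag : ∑ q ∈ Finset.filter (fun q : G × G => q.1 = q.2) (Finset.univ ×ˢ Finset.univ),
      MonoidAlgebra.single (p q.1 * p q.2) (c q.1 * c q.2)
      = ∑ i : G, MonoidAlgebra.single (p i * p i) (c i * c i) := by
    refine Finset.sum_bij' (fun q _ => q.1) (fun i _ => (i, i)) ?_ ?_ ?_ ?_ ?_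
    · intro q hq; exact Finset.mem_univ _
    · intro i _; simp
    · intro q hq
      have h2 : q.1 = q.2 := (Finset.mem_filter.mp hq).2
      exact Prod.ext rfl h2
    · intro i _; rfl
    · intro q hq
      have h2 : q.1 = q.2 := (Finset.mem_filter.mp hq).2
      simp only [h2]
  have hoff : ∑ q ∈ Finset.filter (fun q : G × G => ¬ q.1 = q.2) (Finset.univ ×ˢ Finset.univ),
      MonoidAlgebra.single (p q.1 * p q.2) (c q.1 * c q.2) = 0 := by
    refine Finset.sum_involution (fun q _ => q.swap) (fun q hq => ?_) (fun q hq _ => ?_)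
      (fun q hq => ?_) (fun q hq => rfl)
    · rcases hp q.1 with h | h
      · rcases hp q.2 with h' | h'
        · rw [Prod.fst_swap, Prod.snd_swap, hA _ h' _ h, mul_comm (c q.2)]
          exact Raddself _
        · simp [h']
      · simp [h]
    · have := (Finset.mem_filter.mp hq).2
      intro hc
      exact this (congrArg Prod.fst hc.symm) |>.elim
    · simp only [Finset.mem_filter, Finset.mem_product] at hq ⊢
      exact ⟨⟨Finset.mem_univ _, Finset.mem_univ _⟩, fun h => hq.2 (by
        rcases q with ⟨q1,q2⟩; simpa [eq_comm] using h)⟩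
  rw [hdiag, hoff, add_zero]
variable {A} in
lemma v_pow (hA : ∀ x ∈ A, ∀ y ∈ A, x * y = y * x)
    (v : MonoidAlgebra K G) (hv : ∀ g, g ∉ A → v g = 0) (k : ℕ) :
    v ^ (2 ^ (k+1)) = ∑ i : G, MonoidAlgebra.single (i ^ (2^(k+1))) ((v i) ^ (2^(k+1))) := by
  induction k with
  | zero =>
    have h0 : v ^ ((2:ℕ) ^ 1) = (∑ i : G, MonoidAlgebra.single i (v i)) ^ 2 := by
      rw [(Finsupp.sum_fintype v.coeff MonoidAlgebra.single
        (fun i => MonoidAlgebra.single_zero i)).symm.trans (MonoidAlgebra.sum_coeff_single v), pow_one]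
    rw [h0, sum_single_sq hA _ _ (fun i => ?_)]
    · exact Finset.sum_congr rfl fun i _ => by norm_num [pow_two]
    · by_cases hi : i ∈ A
      · exact Or.inl hi
      · exact Or.inr (hv i hi)
  | succ k ih =>
    have h2 : (2:ℕ) ^ (k+2) = 2^(k+1) * 2 := pow_succ 2 (k+1)
    have he : 2^(k+1) + 2^(k+1) = 2^(k+2) := by rw [h2, mul_two]
    rw [h2, pow_mul, ih, sum_single_sq hA _ _ (fun i => ?_)]
    · refine Finset.sum_congr rfl fun i _ => ?_
      rw [← pow_add, ← pow_add, he, ← h2]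
    · by_cases hi : i ∈ A
      · exact Or.inl (A.pow_mem hi _)
      · exact Or.inr (by rw [hv i hi, zero_pow (by positivity)])

variable {A} in
lemma v_nilpotent (hA : ∀ x ∈ A, ∀ y ∈ A, x * y = y * x)
    (v : MonoidAlgebra K G) (hv : ∀ g, g ∉ A → v g = 0) (hv0 : ∑ i : G, v i = 0)
    (m : ℕ) (hm : ∀ g : G, g ^ (2^(m+1)) = 1) : v ^ (2^(m+1)) = 0 := by
  haveI : Fact (Nat.Prime 2) := ⟨Nat.prime_two⟩
  rw [v_pow hA v hv m]
  have h1 : ∀ i : G, MonoidAlgebra.single (i ^ (2^(m+1))) ((v i) ^ (2^(m+1)))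
      = MonoidAlgebra.single (1:G) ((v i) ^ (2^(m+1))) := fun i => by rw [hm i]
  simp_rw [h1]
  have h4 : ∑ x : G, MonoidAlgebra.single (1:G) ((v x) ^ (2^(m+1)))
      = MonoidAlgebra.single (1:G) (∑ x : G, (v x) ^ (2^(m+1))) :=
    (map_sum (MonoidAlgebra.singleAddHom (1:G)) (fun x => (v x) ^ (2^(m+1))) Finset.univ).symm
  rw [h4, ← sum_pow_char_pow, hv0, zero_pow (by positivity)]
  exact MonoidAlgebra.single_zero _

variable {A} in
lemma u_pow (hA : ∀ x ∈ A, ∀ y ∈ A, x * y = y * x)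
    (b : G) (hbb : b * b = 1) (hinv : ∀ a ∈ A, b⁻¹ * a * b = a⁻¹)
    (w : MonoidAlgebra K G) (hw : ∀ g, g ∉ A → w g = 0) (k : ℕ) :
    (w * (1 + MonoidAlgebra.single b (1:K))) ^ (2^(k+1))
      = (w * (w + gstar w) ^ (2^(k+1) - 1)) * (1 + MonoidAlgebra.single b (1:K)) := by
  set v := w + gstar w with hvdef
  have hv : ∀ g, g ∉ A → v g = 0 := suppA_add A _ _ hw (suppA_gstar A _ hw)
  have hgv : gstar v = v := by
    rw [hvdef, gstar_add, gstar_gstar, add_comm]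
  have hvj : ∀ j : ℕ, j ≠ 0 → ∀ g, g ∉ A → (v ^ j) g = 0 := fun j hj => suppA_pow A v hv j hj
  induction k with
  | zero =>
    rw [pow_one, sq_step b hbb hinv w hw, pow_one]
  | succ k ih =>
    have h2 : (2:ℕ) ^ (k+2) = 2^(k+1) * 2 := pow_succ 2 (k+1)
    set j := 2^(k+1) - 1 with hjdef
    have hj1 : 1 ≤ 2^(k+1) := Nat.one_le_two_pow
    have hwj : ∀ g, g ∉ A → (w * v ^ j) g = 0 :=
      suppA_mul A _ _ hw (hvj j (by omega))
    rw [h2, pow_mul, ih, sq_step b hbb hinv _ hwj]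
    have hgy : gstar (w * v ^ j) = v ^ j * gstar w := by
      rw [gstar_mul, gstar_pow, hgv]
    have hyy : w * v ^ j + gstar (w * v ^ j) = v ^ (j + 1) := by
      rw [hgy, commA A hA w (v ^ j) hw (hvj j (by omega)), ← mul_add, ← hvdef, pow_succ]
    rw [hyy]
    have harith : j + (j + 1) = 2 ^ (k+1) * 2 - 1 := by omega
    rw [mul_assoc w (v ^ j) (v ^ (j+1)), ← pow_add, harith]

lemma one_add_pow (u : MonoidAlgebra K G) (j : ℕ) :
    (1 + u) ^ (2^j) = 1 + u ^ (2^j) := by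
  induction j with
  | zero => rw [pow_zero, pow_one, pow_one]
  | succ j ih =>
    rw [pow_succ, pow_mul, ih, pow_mul]
    have : (1 + u ^ 2 ^ j) ^ 2
        = 1 + ((u ^ 2 ^ j + u ^ 2 ^ j) + (u ^ 2 ^ j) ^ 2) := by noncomm_ring
    rw [this, Raddself, zero_add]
variable {A} in
lemma construct (hA : ∀ x ∈ A, ∀ y ∈ A, x * y = y * x) (hidx : A.index = 2)
    (b : G) (hbb : b * b = 1) (hbA : b ∉ A) (hinv : ∀ a ∈ A, b⁻¹ * a * b = a⁻¹)
    (m : ℕ) (hm : ∀ g : G, g ^ (2^(m+1)) = 1)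
    (w : MonoidAlgebra K G) (hw : ∀ g, g ∉ A → w g = 0) :
    ∃ x : (MonoidAlgebra K G)ˣ, aug K G (x : MonoidAlgebra K G) = 1 ∧
      (x : MonoidAlgebra K G) * gstar (x : MonoidAlgebra K G) = 1 + (w + gstar w) := by
  classical
  set B := MonoidAlgebra.single b (1:K) with hBdef
  set s := gstar w with hsdef
  set v := w + s with hvdef
  set u := w * (1 + B) with hudef
  have hbi : b⁻¹ = b := inv_eq_of_mul_eq_one_right hbb
  have hs : ∀ g, g ∉ A → s g = 0 := suppA_gstar A _ hw
  have hv : ∀ g, g ∉ A → v g = 0 := suppA_add A _ _ hw hs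
  have hv0 : ∑ i : G, v i = 0 := by
    have hsum : ∑ i : G, s i = ∑ i : G, w i := by
      simp_rw [hsdef, gstar_apply]
      exact Equiv.sum_comp (Equiv.inv G) w
    calc ∑ i : G, v i = ∑ i : G, (w i + s i) := rfl
      _ = (∑ i : G, w i) + (∑ i : G, s i) := Finset.sum_add_distrib
      _ = (∑ i : G, w i) + (∑ i : G, w i) := by rw [hsum]
      _ = 0 := CharTwo.add_self_eq_zero _
  have hveq0 : v ^ (2^(m+1)) = 0 := v_nilpotent hA v hv hv0 m hm
  have hvbig : v ^ (2^(m+2) - 1) = 0 := by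
    have hsplit : 2^(m+2) - 1 = 2^(m+1) + (2^(m+1) - 1) := by
      have h1 : (2:ℕ)^(m+2) = 2^(m+1) * 2 := pow_succ 2 (m+1)
      have h2 : 1 ≤ (2:ℕ)^(m+1) := Nat.one_le_two_pow
      omega
    rw [hsplit, pow_add, hveq0, zero_mul]
  have hupow : u ^ (2^(m+2)) = 0 := by
    rw [hudef, u_pow hA b hbb hinv w hw (m+1), ← hsdef, ← hvdef, hvbig, mul_zero, zero_mul]
  have hxpow : (1 + u) ^ (2^(m+2)) = 1 := by
    rw [one_add_pow, hupow, add_zero]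
  have hT : 1 ≤ 2^(m+2) := Nat.one_le_two_pow
  refine ⟨⟨1 + u, (1 + u) ^ (2^(m+2) - 1), ?_, ?_⟩, ?_, ?_⟩
  · rw [← pow_succ', Nat.sub_add_cancel hT, hxpow]
  · rw [← pow_succ, Nat.sub_add_cancel hT, hxpow]
  · show aug K G (1 + u) = 1
    have hB0 : aug K G (1 + B) = 0 := by
      rw [map_add, map_one, hBdef, aug_single]
      exact CharTwo.add_self_eq_zero 1
    rw [map_add, map_one, hudef, map_mul, hB0, mul_zero, add_zero]
  · show (1 + u) * gstar (1 + u) = 1 + (w + gstar w)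
    have h1 : B * w = s * B := B_mul b hbb hinv w hw
    have h1' : B * s = w * B := by
      have := B_mul b hbb hinv s hs
      rwa [hsdef, gstar_gstar] at this
    have h3 : B * B = 1 := by
      rw [hBdef, MonoidAlgebra.single_mul_single, hbb, one_mul, ← MonoidAlgebra.one_def]
    have hgu : gstar (1 + u) = 1 + (s + w * B) := by
      rw [gstar_add, gstar_one, hudef, gstar_mul, gstar_add, gstar_one, hBdef,
        gstar_single, hbi, ← hBdef, add_mul, one_mul, ← hsdef, h1']
    have hu' : u = w + w * B := by rw [hudef, mul_add, mul_one]
    have hkey : (w + w * B) * (s + w * B) = 0 := by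
      have e1 : (w + w * B) * (s + w * B)
          = w*s + (w*B)*(w*B) + ((w*B)*s + w*(w*B)) := by noncomm_ring
      have e2 : (w*B)*s = w*(w*B) := by rw [mul_assoc, h1']
      have e3 : (w*B)*(w*B) = w*s := by
        calc (w*B)*(w*B) = w*((B*w)*B) := by noncomm_ring
          _ = w*((s*B)*B) := by rw [h1]
          _ = w*s := by rw [mul_assoc s B B, h3, mul_one]
      rw [e1, e2, e3, Raddself, Raddself, add_zero]
    rw [hgu, hu']
    have e4 : (1 + (w + w * B)) * (1 + (s + w * B))
        = 1 + ((w + s) + (w*B + w*B)) + (w + w * B) * (s + w * B) := by noncomm_ring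
    rw [e4, hkey, add_zero, Raddself, add_zero, ← hsdef]
end Main

section Pairing
variable (G : Type*) [Group G]

def pairSetoid : Setoid {g : G // g * g ≠ 1} :=
  ⟨fun x y => x.1 = y.1 ∨ x.1 = y.1⁻¹, by
    constructor
    · intro x; exact Or.inl rfl
    · intro x y h
      rcases h with h | h
      · exact Or.inl h.symm
      · exact Or.inr (by rw [h, inv_inv])
    · intro x y z hxy hyz
      rcases hxy with h | h <;> rcases hyz with h' | h'
      · exact Or.inl (h.trans h')
      · exact Or.inr (h ▸ h')
      · exact Or.inr (by rw [h, h'])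
      · exact Or.inl (by rw [h, h', inv_inv])⟩

def PQ := Quotient (pairSetoid G)

instance [Finite G] : Finite (PQ G) := Quotient.finite _

lemma pq_out_cases (n : {g : G // g * g ≠ 1}) :
    (Quotient.mk (pairSetoid G) n).out = n ∨
    ((Quotient.mk (pairSetoid G) n).out : {g : G // g * g ≠ 1}).1 = n.1⁻¹ := by
  have h := Quotient.mk_out (s := pairSetoid G) n
  rcases h with h | h
  · exact Or.inl (Subtype.ext h)
  · exact Or.inr h

lemma ni_ne_inv (n : {g : G // g * g ≠ 1}) : n.1 ≠ n.1⁻¹ := fun h =>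
  n.2 (by nth_rewrite 2 [h]; exact mul_inv_cancel n.1)

def invN (n : {g : G // g * g ≠ 1}) : {g : G // g * g ≠ 1} :=
  ⟨n.1⁻¹, fun hc => n.2 (by
    have := congrArg (fun t : G => t⁻¹) hc
    simpa [mul_inv_rev] using this)⟩

noncomputable def equivPQBool : {g : G // g * g ≠ 1} ≃ PQ G × Bool := by
  classical
  refine
    { toFun := fun n => (Quotient.mk (pairSetoid G) n,
        decide ((Quotient.mk (pairSetoid G) n).out = n)),
      invFun := fun p => cond p.2 p.1.out (invN G p.1.out),
      left_inv := ?_, right_inv := ?_ }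
  · intro n
    rcases pq_out_cases G n with h | h
    · show cond (decide ((Quotient.mk (pairSetoid G) n).out = n)) _ _ = n
      rw [decide_eq_true h]
      exact h
    · have hne : (Quotient.mk (pairSetoid G) n).out ≠ n := fun hc =>
        ni_ne_inv G n ((congrArg Subtype.val hc).symm.trans h)
      show cond (decide ((Quotient.mk (pairSetoid G) n).out = n)) _ _ = n
      rw [decide_eq_false hne]
      show invN G (Quotient.mk (pairSetoid G) n).out = n
      refine Subtype.ext ?_
      show ((Quotient.mk (pairSetoid G) n).out).1⁻¹ = n.1
      rw [h, inv_inv]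
  · rintro ⟨q, bb⟩
    cases bb with
    | false =>
      show (Quotient.mk (pairSetoid G) (invN G q.out),
        decide ((Quotient.mk (pairSetoid G) (invN G q.out)).out = invN G q.out)) = (q, false)
      have hmk : Quotient.mk (pairSetoid G) (invN G q.out) = q :=
        (Quotient.sound (Or.inr rfl)).trans q.out_eq
      have hne : q.out ≠ invN G q.out := fun hc =>
        ni_ne_inv G q.out (congrArg Subtype.val hc)
      refine Prod.ext hmk ?_
      show decide ((Quotient.mk (pairSetoid G) (invN G q.out)).out = invN G q.out) = false
      rw [hmk]
      exact decide_eq_false hne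
    | true =>
      show (Quotient.mk (pairSetoid G) q.out,
        decide ((Quotient.mk (pairSetoid G) q.out).out = q.out)) = (q, true)
      have h1 : Quotient.mk (pairSetoid G) q.out = q := q.out_eq
      refine Prod.ext h1 ?_
      show decide ((Quotient.mk (pairSetoid G) q.out).out = q.out) = true
      rw [h1]
      exact decide_eq_true rfl

end Pairing

lemma card_ni (G : Type*) [Group G] [Finite G] :
    Nat.card {g : G // g * g ≠ 1} = 2 * Nat.card (PQ G) := by
  rw [Nat.card_congr (equivPQBool G), Nat.card_prod, Nat.card_eq_fintype_card (α := Bool)]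
  simp [mul_comm]

lemma inv_ni {G : Type*} [Group G] {g : G} (hg : ¬ (g * g = 1)) : ¬ (g⁻¹ * g⁻¹ = 1) :=
  fun hc => hg (by
    have := congrArg (fun t : G => t⁻¹) hc
    simpa [mul_inv_rev] using this)

section WS
variable (K G : Type*) [Field K] [CharP K 2] [Group G] [Fintype G]

def Wset : Set (MonoidAlgebra K G) :=
  {v | (∀ g : G, v g⁻¹ = v g) ∧ ∀ g : G, g * g = 1 → v g = 0}

lemma efof_apply (fn : G → K) (g : G) :
    (MonoidAlgebra.ofCoeff (Finsupp.equivFunOnFinite.symm fn) : MonoidAlgebra K G) g = fn g := rfl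


noncomputable def equivW : ↥(Wset K G) ≃ (PQ G → K) := by
  classical
  refine
    { toFun := fun v q => (v : MonoidAlgebra K G) q.out.1,
      invFun := fun f => ⟨MonoidAlgebra.ofCoeff <| Finsupp.equivFunOnFinite.symm
        (fun g => if h : ¬ (g * g = 1) then f (Quotient.mk (pairSetoid G) ⟨g, h⟩) else 0),
        ?_, ?_⟩,
      left_inv := ?_, right_inv := ?_ }
  · -- symmetry
    intro g
    rw [efof_apply, efof_apply]
    by_cases h : g * g = 1
    · have hgi : g⁻¹ = g := inv_eq_of_mul_eq_one_right h
      rw [hgi]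
    · rw [dif_pos (inv_ni h), dif_pos h]
      exact congrArg f (Quotient.sound (Or.inr rfl))
  · -- involutions vanish
    intro g hg
    rw [efof_apply, dif_neg (not_not_intro hg)]
  · -- left inverse
    rintro ⟨val, hsym, hz⟩
    refine Subtype.ext ?_
    refine MonoidAlgebra.ext (Finsupp.ext fun g => ?_)
    rw [efof_apply]
    by_cases h : g * g = 1
    · rw [dif_neg (not_not_intro h)]
      exact (hz g h).symm
    · rw [dif_pos h]
      show val ((Quotient.mk (pairSetoid G) ⟨g, h⟩).out).1 = val g
      rcases pq_out_cases G ⟨g, h⟩ with ho | ho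
      · rw [ho]
      · rw [ho]
        exact hsym g
  · -- right inverse
    intro f
    funext q
    show (MonoidAlgebra.ofCoeff <| Finsupp.equivFunOnFinite.symm
        (fun g => if h : ¬ (g * g = 1) then f (Quotient.mk (pairSetoid G) ⟨g, h⟩) else 0)
        : MonoidAlgebra K G) q.out.1 = f q
    rw [efof_apply, dif_pos q.out.2]
    exact congrArg f (Quotient.out_eq q)

lemma half_exists (v : MonoidAlgebra K G) (hsym : ∀ g : G, v g⁻¹ = v g)
    (hz : ∀ g : G, g * g = 1 → v g = 0) :
    ∃ w : MonoidAlgebra K G, (∀ g, v g = 0 → w g = 0) ∧ w + gstar w = v := by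
  classical
  set w : MonoidAlgebra K G := MonoidAlgebra.ofCoeff <| Finsupp.equivFunOnFinite.symm
    (fun g => if h : ¬ (g * g = 1) then
      (if (Quotient.mk (pairSetoid G) ⟨g, h⟩).out = (⟨g, h⟩ : {x : G // x * x ≠ 1})
        then v g else 0) else 0) with hwdef
  have hwapp : ∀ g : G, w g = if h : ¬ (g * g = 1) then
      (if (Quotient.mk (pairSetoid G) ⟨g, h⟩).out = (⟨g, h⟩ : {x : G // x * x ≠ 1})
        then v g else 0) else 0 := fun g => rfl
  refine ⟨w, fun g h0 => ?_, ?_⟩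
  · rw [hwapp]
    split_ifs with h1 h2 <;> simp [h0]
  · refine MonoidAlgebra.ext (Finsupp.ext fun g => ?_)
    rw [MonoidAlgebra.coeff_add, Finsupp.add_apply, gstar_apply, hwapp, hwapp]
    by_cases hg : g * g = 1
    · have hgi : g⁻¹ = g := inv_eq_of_mul_eq_one_right hg
      rw [hgi, dif_neg (not_not_intro hg), add_zero]
      exact (hz g hg).symm
    · have hgi' := inv_ni hg
      have hclass : Quotient.mk (pairSetoid G) (⟨g⁻¹, hgi'⟩ : {x : G // x * x ≠ 1})
          = Quotient.mk (pairSetoid G) ⟨g, hg⟩ := Quotient.sound (Or.inr rfl)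
      rw [dif_pos hg, dif_pos hgi']
      rcases pq_out_cases G ⟨g, hg⟩ with ho | ho
      · have h2 : (Quotient.mk (pairSetoid G) (⟨g⁻¹, hgi'⟩ : {x : G // x * x ≠ 1})).out
            ≠ ⟨g⁻¹, hgi'⟩ := by
          rw [hclass, ho]
          intro hc
          exact ni_ne_inv G ⟨g, hg⟩ (congrArg Subtype.val hc)
        rw [if_pos ho, if_neg h2, add_zero]
      · have h1 : (Quotient.mk (pairSetoid G) ⟨g, hg⟩).out
            ≠ (⟨g, hg⟩ : {x : G // x * x ≠ 1}) := fun hc =>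
          ni_ne_inv G ⟨g, hg⟩ ((congrArg Subtype.val hc).symm.trans ho)
        have h2 : (Quotient.mk (pairSetoid G) (⟨g⁻¹, hgi'⟩ : {x : G // x * x ≠ 1})).out
            = ⟨g⁻¹, hgi'⟩ := by
          rw [hclass]
          exact Subtype.ext ho
        rw [if_neg h1, if_pos h2, zero_add]
        exact hsym g
end WS


/-- let `K` be a finite field of characteristic `2` and `G` a finite
`2`-group with an abelian subgroup `A` of index `2` and an element `b ∉ A` of order `2`
with `b⁻¹ab = a⁻¹` for all `a ∈ A`. Then `S_K(G) = {xx* : x ∈ V(KG)}` has order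
`|K| ^ ((|A| - |A[2]|) / 2)`. -/
theorem stmt15 (K G : Type*) [Field K] [Fintype K] [CharP K 2] [Group G] [Finite G]
    (hG2 : IsPGroup 2 G)
    (A : Subgroup G) (hA : ∀ x ∈ A, ∀ y ∈ A, x * y = y * x) (hAindex : A.index = 2)
    (b : G) (hb : b ∉ A) (hb2 : orderOf b = 2)
    (hinv : ∀ a ∈ A, b⁻¹ * a * b = a⁻¹) :
    Nat.card {z : MonoidAlgebra K G | ∃ x : (MonoidAlgebra K G)ˣ,
        aug K G (x : MonoidAlgebra K G) = 1 ∧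
        z = (x : MonoidAlgebra K G) * gstar (x : MonoidAlgebra K G)} =
      Nat.card K ^ ((Nat.card A - Nat.card {a : A | a ^ 2 = 1}) / 2) := by
  classical
  letI : Fintype G := Fintype.ofFinite G
  haveI : Fact (Nat.Prime 2) := ⟨Nat.prime_two⟩
  have hbb : b * b = 1 := by
    have h := pow_orderOf_eq_one b
    rwa [hb2, pow_two] at h
  have hout : ∀ g : G, g ∉ A → g * g = 1 := fun g hg =>
    out_sq hAindex b hbb hb hinv g hg
  obtain ⟨n, hn⟩ := hG2.exists_card_eq
  have hm : ∀ g : G, g ^ (2^(n+1)) = 1 := by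
    intro g
    have h1 : g ^ (2^n) = 1 := by rw [← hn]; exact pow_card_eq_one'
    rw [pow_succ, pow_mul, h1, one_pow]
  have hSeq : {z : MonoidAlgebra K G | ∃ x : (MonoidAlgebra K G)ˣ,
        aug K G (x : MonoidAlgebra K G) = 1 ∧
        z = (x : MonoidAlgebra K G) * gstar (x : MonoidAlgebra K G)}
      = (fun v => (1 : MonoidAlgebra K G) + v) '' (Wset K G) := by
    ext z
    constructor
    · rintro ⟨x, hx1, rfl⟩
      refine ⟨(x : MonoidAlgebra K G) * gstar (x : MonoidAlgebra K G) + 1, ⟨?_, ?_⟩, ?_⟩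
      · intro g
        rw [MonoidAlgebra.coeff_add, Finsupp.add_apply, Finsupp.add_apply, norm_apply_inv]
        congr 1
        rw [MonoidAlgebra.one_def, MonoidAlgebra.coeff_single, Finsupp.single_apply, Finsupp.single_apply]
        by_cases hg : g = 1
        · subst hg; rw [inv_one]
        · rw [if_neg (fun h => hg (inv_eq_one.mp h.symm)), if_neg (fun h => hg h.symm)]
      · intro g hgg
        rw [MonoidAlgebra.coeff_add, Finsupp.add_apply]
        by_cases hg : g = 1
        · subst hg
          rw [norm_apply_one, hx1, one_pow, MonoidAlgebra.one_def, MonoidAlgebra.coeff_single, Finsupp.single_apply,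
            if_pos rfl]
          exact CharTwo.add_self_eq_zero 1
        · rw [norm_apply_invol _ g hgg hg, MonoidAlgebra.one_def, MonoidAlgebra.coeff_single, Finsupp.single_apply,
            if_neg (fun h => hg h.symm), add_zero]
      · show (1 : MonoidAlgebra K G) + ((x : MonoidAlgebra K G) * gstar _ + 1) = _
        have h2 : (1 : MonoidAlgebra K G)
            + ((x : MonoidAlgebra K G) * gstar (x : MonoidAlgebra K G) + 1)
            = (x : MonoidAlgebra K G) * gstar (x : MonoidAlgebra K G)
              + ((1 : MonoidAlgebra K G) + 1) := by abel
        rw [h2, Raddself, add_zero]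
    · rintro ⟨v, ⟨hvsym, hvz⟩, rfl⟩
      obtain ⟨w, hw0, hwv⟩ := half_exists K G v hvsym hvz
      have hw : ∀ g, g ∉ A → w g = 0 := fun g hg => hw0 g (hvz g (hout g hg))
      obtain ⟨x, hx1, hx2⟩ := construct hA hAindex b hbb hb hinv n hm w hw
      exact ⟨x, hx1, by rw [hx2, hwv]⟩
  rw [hSeq]
  have hinj : Function.Injective (fun v : MonoidAlgebra K G => 1 + v) :=
    fun a c h => by simpa using h
  rw [Nat.card_image_of_injective hinj, Nat.card_congr (equivW K G), Nat.card_fun]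
  congr 1
  have e : {g : G // g * g ≠ 1} ≃ {a : ↥A // ¬ (a ^ 2 = 1)} := by
    refine
      { toFun := fun g => ⟨⟨g.1, by_contra fun hc => g.2 (hout g.1 hc)⟩, fun hc => g.2 ?_⟩,
        invFun := fun a => ⟨(a.1 : G), fun hc => a.2 ?_⟩,
        left_inv := fun g => Subtype.ext rfl,
        right_inv := fun a => Subtype.ext (Subtype.ext rfl) }
    · have h2 := congrArg (Subtype.val) hc
      rw [SubmonoidClass.coe_pow, OneMemClass.coe_one, pow_two] at h2
      exact h2
    · refine Subtype.ext ?_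
      rw [SubmonoidClass.coe_pow, OneMemClass.coe_one, pow_two]
      exact hc
  have key2 : Nat.card ↥A - Nat.card {a : ↥A | a ^ 2 = 1} = 2 * Nat.card (PQ G) := by
    rw [← card_ni G, Nat.card_congr e]
    show Nat.card ↥A - Nat.card {a : ↥A // a ^ 2 = 1} = _
    letI : Fintype ↥A := Fintype.ofFinite _
    letI : Fintype {a : ↥A // a ^ 2 = 1} := Fintype.ofFinite _
    letI : Fintype {a : ↥A // ¬ (a ^ 2 = 1)} := Fintype.ofFinite _
    rw [Nat.card_eq_fintype_card, Nat.card_eq_fintype_card, Nat.card_eq_fintype_card,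
      Fintype.card_subtype_compl]
  rw [key2, Nat.mul_div_cancel_left _ (by norm_num)]
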